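/- Let X be a topological vector space, Y ⊆ X a subspace, and A ⊆ X an open convex set intersecting Y. Suppose that for each Ω(A∩Y)-family {C_α}_{α∈ℝ} of relatively open convex sets in Y there exists an Ω(A)-family {D_α}_{α∈ℝ} of open convex sets in X with ⋃_{γ<α} C_γ ⊆ D_α ∩ Y ⊆ C_α for all α. Then every continuous quasiconvex function f : A ∩ Y → ℝ extends to a continuous quasiconvex function F : A → ℝ. -/

import Mathlib

/-
The strict sublevel sets `C α = {x ∈ A ∩ Y | f x < α}` of `f` form an Ω(A ∩ Y)-family of
relatively open convex sets, so the hypothesis yields an Ω(A)-family `D` of open convex sets with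
`x ∈ D α ↔ f x < α` on `A ∩ Y`. The extension is `F x = inf {α | x ∈ D α}`. Its sublevel sets
`{F ≤ b} = ⋂_{β > b} D β` are convex; it is upper semicontinuous because `{F < b}` is the union of
the open sets `D c`, `c < b`, and lower semicontinuous because for `c < F x` the closure condition
keeps `x` out of `closure (D c)`, whose complement within `A` lies in `{F ≥ c}`.
-/

/-- `D` is an Ω(E)-family in the ambient space: empty intersection, union `E`,
and the closure of `D α` relative to `E` is contained in `D β` whenever `α < β`. -/
def IsOmegaFamily {X : Type*} [TopologicalSpace X] (E : Set X) (D : ℝ → Set X) : Prop :=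
  (⋂ α : ℝ, D α) = ∅ ∧ (⋃ α : ℝ, D α) = E ∧
    ∀ α β : ℝ, α < β → closure (D α) ∩ E ⊆ D β

open Set

section Sublevel

variable {X : Type*} [TopologicalSpace X] {s : Set X} {f : X → ℝ}

theorem ContinuousOn.isOmegaFamily_sublevel (hf : ContinuousOn f s) :
    IsOmegaFamily s fun α => {x ∈ s | f x < α} := by
  refine ⟨?_, ?_, ?_⟩
  · exact eq_empty_of_forall_notMem fun x hx => lt_irrefl _ (mem_iInter.1 hx (f x)).2
  · exact Subset.antisymm (iUnion_subset fun α x hx => hx.1)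
      fun x hx => mem_iUnion.2 ⟨f x + 1, hx, lt_add_one _⟩
  · rintro α β hαβ x ⟨hx_cl, hx⟩
    have hle : f x ≤ α :=
      ContinuousWithinAt.closure_le hx_cl ((hf x hx).mono fun y hy => hy.1)
        continuousWithinAt_const fun y hy => hy.2.le
    exact ⟨hx, hle.trans_lt hαβ⟩

theorem ContinuousOn.exists_isOpen_sublevel_eq_inter {A T : Set X} (hA : IsOpen A)
    (hf : ContinuousOn f (A ∩ T)) (α : ℝ) :
    ∃ G : Set X, IsOpen G ∧ {x ∈ A ∩ T | f x < α} = G ∩ T := by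
  obtain ⟨u, hu, hfu⟩ := continuousOn_iff'.1 hf (Iio α) isOpen_Iio
  refine ⟨u ∩ A, hu.inter hA, ?_⟩
  rw [inter_assoc, ← hfu]
  ext x
  exact and_comm

end Sublevel

noncomputable def levelFunction {X : Type*} (D : ℝ → Set X) (x : X) : ℝ :=
  sInf {α | x ∈ D α}

theorem levelFunction_eq_of_forall_mem_iff {X : Type*} {D : ℝ → Set X} {x : X} {a : ℝ}
    (h : ∀ α, x ∈ D α ↔ a < α) : levelFunction D x = a := by
  rw [levelFunction, show {α | x ∈ D α} = Ioi a from Set.ext h, csInf_Ioi]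

namespace IsOmegaFamily

variable {X : Type*} [TopologicalSpace X] {A : Set X} {D : ℝ → Set X}

theorem subset (hD : IsOmegaFamily A D) (α : ℝ) : D α ⊆ A :=
  hD.2.1 ▸ subset_iUnion D α

theorem mono (hD : IsOmegaFamily A D) {α β : ℝ} (h : α < β) : D α ⊆ D β :=
  fun _ hx => hD.2.2 α β h ⟨subset_closure hx, hD.subset α hx⟩

theorem bddBelow_setOf_mem (hD : IsOmegaFamily A D) (x : X) : BddBelow {α | x ∈ D α} := by
  obtain ⟨α₀, hα₀⟩ : ∃ α, x ∉ D α := by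
    by_contra! h
    simpa [hD.1] using mem_iInter.2 h
  exact ⟨α₀, fun β hβ => not_lt.1 fun h => hα₀ (hD.mono h hβ)⟩

theorem levelFunction_le_of_mem (hD : IsOmegaFamily A D) {x : X} {α : ℝ} (hx : x ∈ D α) :
    levelFunction D x ≤ α :=
  csInf_le (hD.bddBelow_setOf_mem x) hx

theorem mem_of_levelFunction_lt (hD : IsOmegaFamily A D) {x : X} (hx : x ∈ A) {α : ℝ}
    (h : levelFunction D x < α) : x ∈ D α := by
  have hne : {α | x ∈ D α}.Nonempty := by
    rw [← hD.2.1] at hx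
    exact mem_iUnion.1 hx
  obtain ⟨β, hβ, hβα⟩ := exists_lt_of_csInf_lt hne h
  exact hD.mono hβα hβ

theorem levelFunction_le_of_forall_lt_mem (hD : IsOmegaFamily A D) {x : X} {a : ℝ}
    (h : ∀ β, a < β → x ∈ D β) : levelFunction D x ≤ a :=
  le_of_forall_gt_imp_ge_of_dense fun β hβ => hD.levelFunction_le_of_mem (h β hβ)

theorem isOpen (hD : IsOmegaFamily A D) (hopen : ∀ α, IsOpen (D α)) : IsOpen A :=
  hD.2.1 ▸ isOpen_iUnion hopen

theorem continuousOn_levelFunction (hD : IsOmegaFamily A D) (hopen : ∀ α, IsOpen (D α)) :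
    ContinuousOn (levelFunction D) A := by
  rw [(hD.isOpen hopen).continuousOn_iff]
  intro x hx
  refine tendsto_order.2 ⟨fun a ha => ?_, fun b hb => ?_⟩
  · obtain ⟨c, hac, hcx⟩ := exists_between ha
    have hx_not_mem : x ∉ closure (D c) := fun hcl => hcx.not_ge <|
      hD.levelFunction_le_of_forall_lt_mem fun β hβ => hD.2.2 c β hβ ⟨hcl, hx⟩
    filter_upwards [(hD.isOpen hopen).mem_nhds hx,
      isClosed_closure.isOpen_compl.mem_nhds hx_not_mem] with y hyA hy
    exact hac.trans_le <| not_lt.1 fun hlt =>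
      hy (subset_closure (hD.mem_of_levelFunction_lt hyA hlt))
  · obtain ⟨c, hxc, hcb⟩ := exists_between hb
    filter_upwards [(hopen c).mem_nhds (hD.mem_of_levelFunction_lt hx hxc)] with y hy
    exact (hD.levelFunction_le_of_mem hy).trans_lt hcb

theorem quasiconvexOn_levelFunction [AddCommMonoid X] [Module ℝ X] (hD : IsOmegaFamily A D)
    (hconv : ∀ α, Convex ℝ (D α)) : QuasiconvexOn ℝ A (levelFunction D) := by
  intro b
  have hsub : {x ∈ A | levelFunction D x ≤ b} = ⋂ β ∈ Ioi b, D β := by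
    ext x
    simp only [mem_iInter, mem_Ioi]
    constructor
    · rintro ⟨hx, hle⟩ β hβ
      exact hD.mem_of_levelFunction_lt hx (hle.trans_lt hβ)
    · intro h
      exact ⟨hD.subset _ (h (b + 1) (lt_add_one b)), hD.levelFunction_le_of_forall_lt_mem h⟩
  rw [hsub]
  exact convex_iInter₂ fun β _ => hconv β

end IsOmegaFamily

theorem stmt_17_general {X : Type*} [AddCommGroup X] [Module ℝ X] [TopologicalSpace X]
    (Y : Submodule ℝ X) (A : Set X) (hAopen : IsOpen A)
    (hyp : ∀ C : ℝ → Set X,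
      (∀ α, Convex ℝ (C α) ∧ ∃ G : Set X, IsOpen G ∧ C α = G ∩ (Y : Set X)) →
      IsOmegaFamily (A ∩ (Y : Set X)) C →
      ∃ D : ℝ → Set X, (∀ α, IsOpen (D α) ∧ Convex ℝ (D α)) ∧
        IsOmegaFamily A D ∧
        ∀ α : ℝ, (⋃ γ < α, C γ) ⊆ D α ∩ (Y : Set X) ∧ D α ∩ (Y : Set X) ⊆ C α) :
    ∀ f : X → ℝ, ContinuousOn f (A ∩ (Y : Set X)) →
      QuasiconvexOn ℝ (A ∩ (Y : Set X)) f →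
      ∃ F : X → ℝ, ContinuousOn F A ∧ QuasiconvexOn ℝ A F ∧
        ∀ x ∈ A ∩ (Y : Set X), F x = f x := by
  intro f hfc hfq
  obtain ⟨D, hD_open_convex, hD, hsandwich⟩ := hyp (fun α => {x ∈ A ∩ Y | f x < α})
    (fun α => ⟨hfq.convex_lt α, hfc.exists_isOpen_sublevel_eq_inter hAopen α⟩)
    hfc.isOmegaFamily_sublevel
  refine ⟨levelFunction D, hD.continuousOn_levelFunction fun α => (hD_open_convex α).1,
    hD.quasiconvexOn_levelFunction fun α => (hD_open_convex α).2, fun x hx => ?_⟩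
  refine levelFunction_eq_of_forall_mem_iff fun α => ⟨fun h => ((hsandwich α).2 ⟨h, hx.2⟩).2,
    fun h => ?_⟩
  obtain ⟨γ, hxγ, hγα⟩ := exists_between h
  exact ((hsandwich α).1 (mem_iUnion₂.2 ⟨γ, hγα, hx, hxγ⟩)).1

theorem stmt_17 {X : Type*} [AddCommGroup X] [Module ℝ X] [TopologicalSpace X]
    [IsTopologicalAddGroup X] [ContinuousSMul ℝ X]
    (Y : Submodule ℝ X) (A : Set X) (hAopen : IsOpen A) (hAconv : Convex ℝ A)
    (hne : (A ∩ (Y : Set X)).Nonempty)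
    (hyp : ∀ C : ℝ → Set X,
      (∀ α, Convex ℝ (C α) ∧ ∃ G : Set X, IsOpen G ∧ C α = G ∩ (Y : Set X)) →
      IsOmegaFamily (A ∩ (Y : Set X)) C →
      ∃ D : ℝ → Set X, (∀ α, IsOpen (D α) ∧ Convex ℝ (D α)) ∧
        IsOmegaFamily A D ∧
        ∀ α : ℝ, (⋃ γ < α, C γ) ⊆ D α ∩ (Y : Set X) ∧ D α ∩ (Y : Set X) ⊆ C α) :
    ∀ f : X → ℝ, ContinuousOn f (A ∩ (Y : Set X)) →
      QuasiconvexOn ℝ (A ∩ (Y : Set X)) f →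
      ∃ F : X → ℝ, ContinuousOn F A ∧ QuasiconvexOn ℝ A F ∧
        ∀ x ∈ A ∩ (Y : Set X), F x = f x :=
  stmt_17_general Y A hAopen hyp
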